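/- arXiv:2401.07225 — 5 statements merged into one kernel-verified Lean document; each statement's English description precedes it below -/
import Mathlib

section
/- Let n ≥ 3 be an integer and let μ_L, μ_V, D, x be positive real numbers. Set a := (2/μ_V)·((n−1)/n)²·D² and c := (2/(μ_L·μ_V))·((n−1)/n)·D². Then there exists a real number R > 0 satisfying x + a·R² ≤ μ_L·R^(2(n−1)/n) if and only if c^(n−1)·x ≤ μ_L/n. -/
/-!
Since `a = μ_L ((n-1)/n) c`, in the variable `s = R²` the stability inequality reads
`x ≤ μ_L (s^((n-1)/n) - ((n-1)/n) c s)`. Weighted AM–GM applied to `c s` and `c^(-(n-1))` with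
weights `(n-1)/n` and `1/n` bounds the right-hand side by `μ_L c^(-(n-1)) / n`, with equality
at `s = c^(-n)`; so a solution exists iff `x ≤ μ_L c^(-(n-1)) / n`.
-/

open Real

theorem rpow_le_mul_add_rpow_neg {N c s : ℝ} (hN : 1 ≤ N) (hc : 0 < c) (hs : 0 ≤ s) :
    s ^ ((N - 1) / N) ≤ (N - 1) / N * c * s + c ^ (-(N - 1)) / N := by
  have hN0 : N ≠ 0 := by positivity
  have hamgm := geom_mean_le_arith_mean2_weighted (w₁ := (N - 1) / N) (w₂ := 1 / N)
    (by bound) (by positivity) (mul_nonneg hc.le hs) (rpow_nonneg hc.le (-(N - 1)))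
    (by field_simp; ring)
  have hcancel : c ^ ((N - 1) / N) * (c ^ (-(N - 1))) ^ (1 / N) = 1 := by
    rw [← rpow_mul hc.le, ← rpow_add hc]
    convert rpow_zero c using 2
    field_simp; ring
  calc s ^ ((N - 1) / N)
      = (c * s) ^ ((N - 1) / N) * (c ^ (-(N - 1))) ^ (1 / N) := by
        rw [mul_rpow hc.le hs, mul_right_comm, hcancel, one_mul]
    _ ≤ (N - 1) / N * c * s + c ^ (-(N - 1)) / N := by
        convert hamgm using 1; ring

theorem rpow_eq_mul_add_rpow_neg_at_rpow_neg {N c : ℝ} (hN : N ≠ 0) (hc : 0 < c) :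
    (c ^ (-N)) ^ ((N - 1) / N) = (N - 1) / N * c * c ^ (-N) + c ^ (-(N - 1)) / N := by
  have hpow : (c ^ (-N)) ^ ((N - 1) / N) = c ^ (-(N - 1)) := by
    rw [← rpow_mul hc.le]; congr 1; field_simp
  have hmul : c * c ^ (-N) = c ^ (-(N - 1)) := by
    rw [show -(N - 1) = 1 + -N by ring, rpow_add hc, rpow_one]
  rw [hpow, mul_assoc, hmul]
  field_simp; ring

theorem exists_pos_add_mul_le_rpow_iff {N c μ x : ℝ} (hN : 1 ≤ N) (hc : 0 < c) (hμ : 0 ≤ μ) :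
    (∃ s : ℝ, 0 < s ∧ x + μ * ((N - 1) / N) * c * s ≤ μ * s ^ ((N - 1) / N)) ↔
      c ^ (N - 1) * x ≤ μ / N := by
  have hN0 : 0 < N := by linarith
  have hcN : 0 < c ^ (N - 1) := rpow_pos_of_pos hc _
  have hthreshold : c ^ (N - 1) * x ≤ μ / N ↔ x ≤ μ * (c ^ (-(N - 1)) / N) := by
    rw [rpow_neg hc.le, mul_comm, ← le_div_iff₀ hcN]
    field_simp
  rw [hthreshold]
  constructor
  · rintro ⟨s, hs, hstab⟩
    nlinarith [mul_le_mul_of_nonneg_left (rpow_le_mul_add_rpow_neg hN hc hs.le) hμ]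
  · intro hx
    refine ⟨c ^ (-N), rpow_pos_of_pos hc _, ?_⟩
    rw [rpow_eq_mul_add_rpow_neg_at_rpow_neg hN0.ne' hc]
    linarith

theorem stability_condition_iff_general
    (n : ℕ) (hn : 3 ≤ n) (μL μV D x : ℝ)
    (hμL : 0 < μL) (hμV : 0 < μV) (hD : 0 < D)
    (a c : ℝ)
    (ha : a = (2 / μV) * (((n : ℝ) - 1) / n) ^ 2 * D ^ 2)
    (hc : c = (2 / (μL * μV)) * (((n : ℝ) - 1) / n) * D ^ 2) :
    (∃ R : ℝ, 0 < R ∧ x + a * R ^ 2 ≤ μL * R ^ ((2 * ((n : ℝ) - 1)) / n)) ↔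
      c ^ (n - 1) * x ≤ μL / n := by
  have hn3 : (3 : ℝ) ≤ n := by exact_mod_cast hn
  have hc0 : 0 < c := by
    rw [hc]; have : (0 : ℝ) < n - 1 := by linarith
    positivity
  have hexp (R : ℝ) (hR : 0 ≤ R) :
      R ^ ((2 * ((n : ℝ) - 1)) / n) = (R ^ 2) ^ (((n : ℝ) - 1) / n) := by
    rw [mul_div_assoc, ← rpow_two, ← rpow_mul hR]
  have ha' : a = μL * (((n : ℝ) - 1) / n) * c := by
    rw [ha, hc]; field_simp
  have hcpow : c ^ (n - 1) = c ^ ((n : ℝ) - 1) := by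
    rw [← rpow_natCast, Nat.cast_sub (by omega), Nat.cast_one]
  rw [hcpow, ← exists_pos_add_mul_le_rpow_iff (by linarith) hc0 hμL.le, ha']
  constructor
  · rintro ⟨R, hR, hstab⟩
    refine ⟨R ^ 2, by positivity, ?_⟩
    rwa [hexp R hR.le] at hstab
  · rintro ⟨s, hs, hstab⟩
    refine ⟨√s, sqrt_pos.mpr hs, ?_⟩
    rwa [hexp _ (sqrt_nonneg s), sq_sqrt hs.le]

/-- The stability inequality `x + a R² ≤ μ_L R^(2(n-1)/n)` admits a positive solution `R`
if and only if the smallness condition `c^(n-1) x ≤ μ_L / n` holds, where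
`a = (2/μ_V)((n-1)/n)² D²` and `c = (2/(μ_L μ_V))((n-1)/n) D²`. -/
theorem stability_condition_iff
    (n : ℕ) (hn : 3 ≤ n) (μL μV D x : ℝ)
    (hμL : 0 < μL) (hμV : 0 < μV) (hD : 0 < D) (hx : 0 < x)
    (a c : ℝ)
    (ha : a = (2 / μV) * (((n : ℝ) - 1) / n) ^ 2 * D ^ 2)
    (hc : c = (2 / (μL * μV)) * (((n : ℝ) - 1) / n) * D ^ 2) :
    (∃ R : ℝ, 0 < R ∧ x + a * R ^ 2 ≤ μL * R ^ ((2 * ((n : ℝ) - 1)) / n)) ↔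
      c ^ (n - 1) * x ≤ μL / n :=
  stability_condition_iff_general n hn μL μV D x hμL hμV hD a c ha hc
end

section
/- Let n ≥ 3 be an integer and set N := 2n/(n−2). Let A₁ ≥ A₂ > 0 be real numbers and define f : (0, 1] → ℝ by f(t) = (1−t)^(N+1)·(A₁² − A₂²·t^(−(N+1))). Set t* := (A₂/A₁)^(2/(N+2)) (so 0 < t* ≤ 1). Then f is monotone nondecreasing on (0, t*] and monotone nonincreasing on [t*, 1]. -/
open Set

/-!
With `p = N + 1`, `a = A₁²`, `b = A₂²` one computes
`f'(t) = p (1 - t)^(p - 1) (b t^(-(p + 1)) - a)` on `(0, 1)`, whose sign is that of `t* - t`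
for `t* = (b / a)^(1 / (p + 1)) = (A₂ / A₁)^(2 / (N + 2))`. Since `p ≥ 0`, `f` is continuous on
`(0, 1]`, and the monotonicity follows from the mean value theorem.
-/

noncomputable def lichnerowiczProfile (p a b t : ℝ) : ℝ :=
  (1 - t) ^ p * (a - b * t ^ (-p))

namespace lichnerowiczProfile

variable {p a b t : ℝ}

theorem hasDerivAt (ht₀ : 0 < t) (ht₁ : t < 1) :
    HasDerivAt (lichnerowiczProfile p a b)
      (p * (1 - t) ^ (p - 1) * (b * t ^ (-(p + 1)) - a)) t := by
  have hleft : HasDerivAt (fun t : ℝ => (1 - t) ^ p) (-(p * (1 - t) ^ (p - 1))) t := by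
    simpa using ((hasDerivAt_id' t).const_sub 1).rpow_const (p := p) (Or.inl (by linarith))
  have hright : HasDerivAt (fun t : ℝ => a - b * t ^ (-p)) (-(b * (-p * t ^ (-p - 1)))) t :=
    ((Real.hasDerivAt_rpow_const (Or.inl ht₀.ne')).const_mul b).const_sub a
  refine (hleft.mul hright).congr_deriv ?_
  have h1t : (1 - t) ^ p = (1 - t) ^ (p - 1) * (1 - t) := by
    rw [← Real.rpow_add_one (by linarith)]; ring_nf
  have ht : t ^ (-p) = t ^ (-(p + 1)) * t := by
    rw [← Real.rpow_add_one ht₀.ne']; ring_nf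
  rw [h1t, ht, show -p - 1 = -(p + 1) by ring]
  ring

theorem continuousOn (hp : 0 ≤ p) : ContinuousOn (lichnerowiczProfile p a b) (Ioc 0 1) := by
  intro t ht
  have hbase : ContinuousAt (fun t : ℝ => (1 - t) ^ p) t :=
    (continuousAt_const.sub continuousAt_id).rpow_const (Or.inr hp)
  have hpow : ContinuousAt (fun t : ℝ => t ^ (-p)) t :=
    Real.continuousAt_rpow_const _ _ (Or.inl ht.1.ne')
  exact (hbase.mul (continuousAt_const.sub (continuousAt_const.mul hpow))).continuousWithinAt

theorem le_mul_rpow_neg_iff (hp : -1 < p) (ha : 0 < a) (hb : 0 ≤ b) (ht : 0 < t) :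
    a ≤ b * t ^ (-(p + 1)) ↔ t ≤ (b / a) ^ (p + 1)⁻¹ := by
  rw [Real.le_rpow_inv_iff_of_pos ht.le (by positivity) (by linarith), le_div_iff₀ ha,
    Real.rpow_neg ht.le, ← div_eq_mul_inv, le_div_iff₀ (by positivity), mul_comm]

theorem monotoneOn (hp : 0 ≤ p) (ha : 0 < a) (hb : 0 ≤ b) (hba : b ≤ a) :
    MonotoneOn (lichnerowiczProfile p a b) (Ioc 0 ((b / a) ^ (p + 1)⁻¹)) := by
  have hcrit : (b / a) ^ (p + 1)⁻¹ ≤ 1 :=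
    Real.rpow_le_one (by positivity) ((div_le_one ha).mpr hba) (by positivity)
  refine monotoneOn_of_hasDerivWithinAt_nonneg
    (f' := fun t => p * (1 - t) ^ (p - 1) * (b * t ^ (-(p + 1)) - a)) (convex_Ioc _ _)
    ((continuousOn hp).mono (Ioc_subset_Ioc_right hcrit)) (fun t ht => ?_) (fun t ht => ?_)
  all_goals rw [interior_Ioc] at ht
  · exact (hasDerivAt ht.1 (ht.2.trans_le hcrit)).hasDerivWithinAt
  · have hsign := (le_mul_rpow_neg_iff (by linarith) ha hb ht.1).mpr ht.2.le
    have : 0 ≤ (1 - t) ^ (p - 1) := Real.rpow_nonneg (by linarith [ht.2.trans_le hcrit]) _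
    have := sub_nonneg.mpr hsign
    positivity

theorem antitoneOn (hp : 0 ≤ p) (ha : 0 < a) (hb : 0 < b) :
    AntitoneOn (lichnerowiczProfile p a b) (Icc ((b / a) ^ (p + 1)⁻¹) 1) := by
  have hcrit : 0 < (b / a) ^ (p + 1)⁻¹ := by positivity
  refine antitoneOn_of_hasDerivWithinAt_nonpos
    (f' := fun t => p * (1 - t) ^ (p - 1) * (b * t ^ (-(p + 1)) - a)) (convex_Icc _ _)
    ((continuousOn hp).mono (Icc_subset_Ioc_left hcrit)) (fun t ht => ?_) (fun t ht => ?_)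
  all_goals rw [interior_Icc] at ht
  · exact (hasDerivAt (hcrit.trans ht.1) ht.2).hasDerivWithinAt
  · have hsign : b * t ^ (-(p + 1)) ≤ a := by
      by_contra! h
      exact ht.1.not_ge ((le_mul_rpow_neg_iff (by linarith) ha hb.le (hcrit.trans ht.1)).mp h.le)
    have : 0 ≤ (1 - t) ^ (p - 1) := Real.rpow_nonneg (by linarith [ht.2]) _
    exact mul_nonpos_of_nonneg_of_nonpos (by positivity) (sub_nonpos.mpr hsign)

end lichnerowiczProfile

/-- For `N = 2n/(n-2)` and `A₁ ≥ A₂ > 0`, the function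
`f(t) = (1-t)^(N+1) (A₁² − A₂² t^(−(N+1)))` is nondecreasing on `(0, t*]` and
nonincreasing on `[t*, 1]`, where `t* = (A₂/A₁)^(2/(N+2))`. -/
theorem lichnerowicz_f_monotone
    (n : ℕ) (hn : 3 ≤ n) (N : ℝ) (hN : N = 2 * (n : ℝ) / ((n : ℝ) - 2))
    (A₁ A₂ : ℝ) (hA₂ : 0 < A₂) (hA : A₂ ≤ A₁)
    (f : ℝ → ℝ)
    (hf : ∀ t : ℝ, f t = (1 - t) ^ (N + 1) * (A₁ ^ 2 - A₂ ^ 2 * t ^ (-(N + 1))))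
    (tstar : ℝ) (htstar : tstar = (A₂ / A₁) ^ (2 / (N + 2))) :
    MonotoneOn f (Ioc 0 tstar) ∧ AntitoneOn f (Icc tstar 1) := by
  have hN₀ : 0 ≤ N + 1 := by
    have : (0 : ℝ) < n - 2 := by
      have : (3 : ℝ) ≤ n := by exact_mod_cast hn
      linarith
    rw [hN]
    positivity
  have hA₁ : 0 < A₁ := hA₂.trans_le hA
  have hf' : f = lichnerowiczProfile (N + 1) (A₁ ^ 2) (A₂ ^ 2) := funext hf
  have htstar' : tstar = (A₂ ^ 2 / A₁ ^ 2) ^ (N + 1 + 1)⁻¹ := by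
    rw [htstar, ← div_pow, ← Real.rpow_natCast, ← Real.rpow_mul (by positivity)]
    congr 1
    ring
  rw [hf', htstar']
  exact ⟨lichnerowiczProfile.monotoneOn hN₀ (by positivity) (by positivity) (by gcongr),
    lichnerowiczProfile.antitoneOn hN₀ (by positivity) (by positivity)⟩
end

section
/- Let n ≥ 3 be an integer and set N := 2n/(n−2). Let A₁ ≥ A₂ > 0 be real numbers. Then for every t ∈ (0, 1], (1−t)^(N+1)·(A₁² − A₂²·t^(−(N+1))) ≤ (A₁^(2/(N+2)) − A₂^(2/(N+2)))^(N+2). -/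
/-!
Put `a = A₁^(2/(N+2))`, `b = A₂^(2/(N+2))` and `p = N + 1`, so that the claim reads
`(1-t)^p (a^(p+1) - b^(p+1) t^(-p)) ≤ (a-b)^(p+1)`. Since `a` is the convex combination
`(1-t) · (a-b)/(1-t) + t · b/t`, this is Jensen's inequality for the convex function `x ↦ x^(p+1)`.
-/

open Real Set

lemma rpow_le_sub_rpow_div_add_rpow_div {p a b t : ℝ} (hp : 0 ≤ p) (hb : 0 ≤ b) (hba : b ≤ a)
    (ht₀ : 0 < t) (ht₁ : t < 1) :
    a ^ (p + 1) ≤ (a - b) ^ (p + 1) / (1 - t) ^ p + b ^ (p + 1) / t ^ p := by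
  have hs : 0 < 1 - t := by linarith
  have hjensen := (convexOn_rpow (by linarith : (1 : ℝ) ≤ p + 1)).2
    (mem_Ici.2 (div_nonneg (sub_nonneg.2 hba) hs.le)) (mem_Ici.2 (div_nonneg hb ht₀.le))
    hs.le ht₀.le (sub_add_cancel 1 t)
  have hcomb : (1 - t) • ((a - b) / (1 - t)) + t • (b / t) = a := by
    simp only [smul_eq_mul]
    field_simp
    ring
  rw [hcomb] at hjensen
  simp only [smul_eq_mul, div_rpow (sub_nonneg.2 hba) hs.le, div_rpow hb ht₀.le,
    rpow_add_one hs.ne', rpow_add_one ht₀.ne'] at hjensen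
  have hcancel {s c x : ℝ} (hs : s ≠ 0) : s * (c / (x * s)) = c / x := by
    rw [← mul_div_assoc, mul_comm s c, mul_div_mul_right _ _ hs]
  rwa [hcancel hs.ne', hcancel ht₀.ne'] at hjensen

lemma one_sub_rpow_mul_sub_le_sub_rpow {p a b t : ℝ} (hp : 0 < p) (hb : 0 ≤ b) (hba : b ≤ a)
    (ht : t ∈ Ioc 0 1) :
    (1 - t) ^ p * (a ^ (p + 1) - b ^ (p + 1) * t ^ (-p)) ≤ (a - b) ^ (p + 1) := by
  obtain ⟨ht₀, ht₁⟩ := ht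
  rcases ht₁.eq_or_lt with rfl | ht₁
  · rw [sub_self, zero_rpow hp.ne', zero_mul]
    exact rpow_nonneg (sub_nonneg.2 hba) _
  have hsp : 0 < (1 - t) ^ p := rpow_pos_of_pos (by linarith) p
  have key := rpow_le_sub_rpow_div_add_rpow_div hp.le hb hba ht₀ ht₁
  rw [rpow_neg ht₀.le, ← div_eq_mul_inv, mul_sub, sub_le_iff_le_add]
  calc (1 - t) ^ p * a ^ (p + 1)
      ≤ (1 - t) ^ p * ((a - b) ^ (p + 1) / (1 - t) ^ p + b ^ (p + 1) / t ^ p) :=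
        mul_le_mul_of_nonneg_left key hsp.le
    _ = (a - b) ^ (p + 1) + (1 - t) ^ p * (b ^ (p + 1) / t ^ p) := by
        rw [mul_add, mul_div_cancel₀ _ hsp.ne']

lemma rpow_div_rpow_self {A q : ℝ} (hA : 0 ≤ A) (hq : q ≠ 0) : (A ^ (2 / q)) ^ q = A ^ 2 := by
  rw [← rpow_mul hA, div_mul_cancel₀ _ hq, rpow_two]

/-- For `N = 2n/(n-2)` and `A₁ ≥ A₂ > 0`, the function
`f(t) = (1-t)^(N+1) (A₁² − A₂² t^(−(N+1)))` is bounded above on `(0,1]` by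
`(A₁^(2/(N+2)) − A₂^(2/(N+2)))^(N+2)`. -/
theorem lichnerowicz_f_upper_bound
    (n : ℕ) (hn : 3 ≤ n) (N : ℝ) (hN : N = 2 * (n : ℝ) / ((n : ℝ) - 2))
    (A₁ A₂ : ℝ) (hA₂ : 0 < A₂) (hA : A₂ ≤ A₁)
    (t : ℝ) (ht : t ∈ Set.Ioc (0 : ℝ) 1) :
    (1 - t) ^ (N + 1) * (A₁ ^ 2 - A₂ ^ 2 * t ^ (-(N + 1))) ≤
      (A₁ ^ (2 / (N + 2)) - A₂ ^ (2 / (N + 2))) ^ (N + 2) := by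
  have hN₀ : 0 < N := by
    have hn' : (3 : ℝ) ≤ n := by exact_mod_cast hn
    rw [hN]
    apply div_pos <;> linarith
  have hexp : N + 1 + 1 = N + 2 := by ring
  have key := one_sub_rpow_mul_sub_le_sub_rpow (by linarith : 0 < N + 1)
    (rpow_nonneg hA₂.le (2 / (N + 2))) (rpow_le_rpow hA₂.le hA (by positivity)) ht
  rwa [hexp, rpow_div_rpow_self (hA₂.le.trans hA) (by positivity),
    rpow_div_rpow_self hA₂.le (by positivity)] at key
end

section
/- Let n ≥ 3 be an integer and set N := 2n/(n−2). Let φ₁, φ₂, A₁, A₂ be positive real numbers. Then (max(φ₁ − φ₂, 0))^(N+1) · (A₁²/φ₁^(N+1) − A₂²/φ₂^(N+1)) ≤ (max(A₁^(2/(N+2)) − A₂^(2/(N+2)), 0))^(N+2). -/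
/-! Write `aᵢ := Aᵢ^(2/(N+2))`, so that `Aᵢ² = aᵢ^(N+2)`. The map `(x, y) ↦ y^(p+1)/x^p` is the
perspective of the convex function `y ↦ y^(p+1)`, hence subadditive on `x > 0` (Radon's
inequality). Applied to `φ₁ = (φ₁ - φ₂) + φ₂` and `max a₁ a₂ = max (a₁ - a₂) 0 + a₂` it bounds
`a₁^(N+2)/φ₁^(N+1) - a₂^(N+2)/φ₂^(N+1)` by `(max (a₁ - a₂) 0)^(N+2)/(φ₁ - φ₂)^(N+1)`. -/

open Real Set

lemma mul_div_rpow_add_one {x y : ℝ} (p : ℝ) (hx : 0 < x) (hy : 0 ≤ y) :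
    x * (y / x) ^ (p + 1) = y ^ (p + 1) / x ^ p := by
  rw [div_rpow hy hx.le, rpow_add_one hx.ne']
  field_simp

theorem rpow_add_div_rpow_le {p x₁ x₂ y₁ y₂ : ℝ} (hp : 0 ≤ p) (hx₁ : 0 < x₁) (hx₂ : 0 < x₂)
    (hy₁ : 0 ≤ y₁) (hy₂ : 0 ≤ y₂) :
    (y₁ + y₂) ^ (p + 1) / (x₁ + x₂) ^ p ≤ y₁ ^ (p + 1) / x₁ ^ p + y₂ ^ (p + 1) / x₂ ^ p := by
  have hX : 0 < x₁ + x₂ := add_pos hx₁ hx₂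
  have jensen := (convexOn_rpow (by linarith : (1 : ℝ) ≤ p + 1)).2
    (mem_Ici.2 (div_nonneg hy₁ hx₁.le)) (mem_Ici.2 (div_nonneg hy₂ hx₂.le))
    (div_nonneg hx₁.le hX.le) (div_nonneg hx₂.le hX.le) (by field_simp)
  have hmean :
      x₁ / (x₁ + x₂) * (y₁ / x₁) + x₂ / (x₁ + x₂) * (y₂ / x₂) = (y₁ + y₂) / (x₁ + x₂) := by
    field_simp
  simp only [smul_eq_mul] at jensen
  rw [hmean] at jensen
  rw [← mul_div_rpow_add_one p hX (add_nonneg hy₁ hy₂), ← mul_div_rpow_add_one p hx₁ hy₁,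
    ← mul_div_rpow_add_one p hx₂ hy₂]
  calc (x₁ + x₂) * ((y₁ + y₂) / (x₁ + x₂)) ^ (p + 1)
      ≤ (x₁ + x₂) * (x₁ / (x₁ + x₂) * (y₁ / x₁) ^ (p + 1)
          + x₂ / (x₁ + x₂) * (y₂ / x₂) ^ (p + 1)) := mul_le_mul_of_nonneg_left jensen hX.le
    _ = x₁ * (y₁ / x₁) ^ (p + 1) + x₂ * (y₂ / x₂) ^ (p + 1) := by field_simp

theorem max_sub_rpow_mul_sub_le {p φ₁ φ₂ a b : ℝ} (hp : 0 < p) (hφ₁ : 0 < φ₁) (hφ₂ : 0 < φ₂)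
    (ha : 0 ≤ a) (hb : 0 ≤ b) :
    max (φ₁ - φ₂) 0 ^ p * (a ^ (p + 1) / φ₁ ^ p - b ^ (p + 1) / φ₂ ^ p) ≤
      max (a - b) 0 ^ (p + 1) := by
  rcases le_or_gt φ₁ φ₂ with hle | hlt
  · rw [max_eq_right (sub_nonpos.2 hle), zero_rpow hp.ne', zero_mul]
    exact rpow_nonneg (le_max_right _ _) _
  have hd : 0 < φ₁ - φ₂ := sub_pos.2 hlt
  rw [max_eq_left hd.le]
  have radon := rpow_add_div_rpow_le hp.le hd hφ₂ (le_max_right (a - b) 0) hb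
  rw [sub_add_cancel, ← max_add_add_right, sub_add_cancel, zero_add] at radon
  have hmono : a ^ (p + 1) / φ₁ ^ p ≤ max a b ^ (p + 1) / φ₁ ^ p := by
    gcongr
    exact le_max_left a b
  have hdp : 0 < (φ₁ - φ₂) ^ p := rpow_pos_of_pos hd p
  calc (φ₁ - φ₂) ^ p * (a ^ (p + 1) / φ₁ ^ p - b ^ (p + 1) / φ₂ ^ p)
      ≤ (φ₁ - φ₂) ^ p * (max (a - b) 0 ^ (p + 1) / (φ₁ - φ₂) ^ p) := by
        gcongr
        linarith
    _ = max (a - b) 0 ^ (p + 1) := by field_simp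

/-- Pointwise inequality at the heart of the maximum-principle estimate for the
difference of two Lichnerowicz solutions:
`(max(φ₁ − φ₂, 0))^(N+1) (A₁²/φ₁^(N+1) − A₂²/φ₂^(N+1)) ≤
   (max(A₁^(2/(N+2)) − A₂^(2/(N+2)), 0))^(N+2)`. -/
theorem lichnerowicz_pointwise_estimate
    (n : ℕ) (hn : 3 ≤ n) (N : ℝ) (hN : N = 2 * (n : ℝ) / ((n : ℝ) - 2))
    (φ₁ φ₂ A₁ A₂ : ℝ) (hφ₁ : 0 < φ₁) (hφ₂ : 0 < φ₂) (hA₁ : 0 < A₁) (hA₂ : 0 < A₂) :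
    (max (φ₁ - φ₂) 0) ^ (N + 1) * (A₁ ^ 2 / φ₁ ^ (N + 1) - A₂ ^ 2 / φ₂ ^ (N + 1)) ≤
      (max (A₁ ^ (2 / (N + 2)) - A₂ ^ (2 / (N + 2))) 0) ^ (N + 2) := by
  have hN : 0 < N := by
    have : (3 : ℝ) ≤ n := by exact_mod_cast hn
    rw [hN]
    apply div_pos <;> linarith
  have hpow : ∀ {A : ℝ}, 0 < A → (A ^ (2 / (N + 2))) ^ (N + 2) = A ^ 2 := fun hA => by
    rw [← rpow_mul hA.le, div_mul_cancel₀ _ (by linarith), rpow_two]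
  have key := max_sub_rpow_mul_sub_le (p := N + 1) (by linarith) hφ₁ hφ₂
    (rpow_nonneg hA₁.le (2 / (N + 2))) (rpow_nonneg hA₂.le (2 / (N + 2)))
  rwa [show N + 1 + 1 = N + 2 by ring, hpow hA₁, hpow hA₂] at key
end

section
/- Let n ≥ 3 be an integer and set N := 2n/(n−2). Let (X, μ) be a measure space and let f, g : X → ℝ be measurable functions with f ≥ 0 and g ≥ 0. Then the L^(N/2+1)-seminorm of f^N − g^N is at most N times the product of the L^(N(N/2+1))-seminorm of f − g with the sum of the ((N−1)/N)-th powers of the L^(N/2+1)-seminorms of f^N and of g^N; that is, ‖f^N − g^N‖_{L^(N/2+1)} ≤ N · ‖f − g‖_{L^(N(N/2+1))} · (‖f^N‖_{L^(N/2+1)}^((N−1)/N) + ‖g^N‖_{L^(N/2+1)}^((N−1)/N)). -/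
/-!
By the mean value theorem, `|a^N - b^N| ≤ N |a - b| (a^(N-1) + b^(N-1))` for `a, b ≥ 0` and
`N ≥ 1`. Hölder's inequality with `1/p = 1/(Np) + s/p`, where `s = (N-1)/N`, then bounds the
`L^p` norm of `f^N - g^N` by `N ‖f - g‖_{Np} ‖f^(N-1) + g^(N-1)‖_{p/s}`, and since
`f^(N-1) = (f^N)^s`, the last factor is at most `‖f^N‖_p^s + ‖g^N‖_p^s`.
-/

open MeasureTheory

namespace Real

theorem rpow_sub_rpow_le_mul_rpow_sub_one {N a b : ℝ} (hN : 1 ≤ N) (hb : 0 ≤ b) (hba : b ≤ a) :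
    a ^ N - b ^ N ≤ N * a ^ (N - 1) * (a - b) := by
  rcases hba.eq_or_lt with rfl | hlt
  · simp
  obtain ⟨c, ⟨hbc, hca⟩, hslope⟩ := exists_hasDerivAt_eq_slope (fun x : ℝ => x ^ N)
    (fun x => N * x ^ (N - 1)) hlt
    (fun _ _ => (hasDerivAt_rpow_const (Or.inr hN)).continuousAt.continuousWithinAt)
    (fun _ _ => hasDerivAt_rpow_const (Or.inr hN))
  have hmvt : a ^ N - b ^ N = N * c ^ (N - 1) * (a - b) := by
    rw [hslope, div_mul_cancel₀ _ (sub_ne_zero.2 hlt.ne')]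
  rw [hmvt]
  gcongr
  · linarith

theorem abs_rpow_sub_rpow_le {N a b : ℝ} (hN : 1 ≤ N) (ha : 0 ≤ a) (hb : 0 ≤ b) :
    |a ^ N - b ^ N| ≤ N * |a - b| * (a ^ (N - 1) + b ^ (N - 1)) := by
  wlog hba : b ≤ a generalizing a b
  · rw [abs_sub_comm, abs_sub_comm a, add_comm]
    exact this hb ha (le_of_not_ge hba)
  rw [abs_of_nonneg (sub_nonneg.2 (rpow_le_rpow hb hba (by linarith))),
    abs_of_nonneg (sub_nonneg.2 hba)]
  calc a ^ N - b ^ N ≤ N * a ^ (N - 1) * (a - b) := rpow_sub_rpow_le_mul_rpow_sub_one hN hb hba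
    _ ≤ N * (a - b) * (a ^ (N - 1) + b ^ (N - 1)) := by
      have := rpow_nonneg hb (N - 1)
      have : 0 ≤ N * (a - b) := mul_nonneg (by linarith) (sub_nonneg.2 hba)
      nlinarith

end Real

section

variable {X : Type*} [MeasurableSpace X] {μ : Measure X}

theorem eLpNorm_rpow_sub_one_of_nonneg {N : ℝ} (hN : 1 < N) {h : X → ℝ} (hh : ∀ x, 0 ≤ h x)
    (p : ENNReal) :
    eLpNorm (fun x => h x ^ (N - 1)) (p / ENNReal.ofReal ((N - 1) / N)) μ =
      eLpNorm (fun x => h x ^ N) p μ ^ ((N - 1) / N) := by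
  have hs : 0 < (N - 1) / N := div_pos (by linarith) (by linarith)
  have hexp : (fun x => h x ^ (N - 1)) = fun x => ‖h x ^ N‖ ^ ((N - 1) / N) := by
    funext x
    rw [Real.norm_of_nonneg (Real.rpow_nonneg (hh x) N), ← Real.rpow_mul (hh x),
      mul_div_cancel₀ _ (by linarith)]
  rw [hexp, eLpNorm_norm_rpow _ hs,
    ENNReal.div_mul_cancel (ENNReal.ofReal_pos.2 hs).ne' ENNReal.ofReal_ne_top]

theorem eLpNorm_rpow_sub_rpow_le {N p : ℝ} (hN : 1 < N) (hp : 1 ≤ p) {f g : X → ℝ}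
    (hfm : AEMeasurable f μ) (hgm : AEMeasurable g μ) (hf : ∀ x, 0 ≤ f x) (hg : ∀ x, 0 ≤ g x) :
    eLpNorm (fun x => f x ^ N - g x ^ N) (ENNReal.ofReal p) μ ≤
      ENNReal.ofReal N * eLpNorm (fun x => f x - g x) (ENNReal.ofReal (N * p)) μ *
        (eLpNorm (fun x => f x ^ N) (ENNReal.ofReal p) μ ^ ((N - 1) / N) +
          eLpNorm (fun x => g x ^ N) (ENNReal.ofReal p) μ ^ ((N - 1) / N)) := by
  set s := (N - 1) / N
  have hs : 0 < s := div_pos (by linarith) (by linarith)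
  have hs1 : s < 1 := (div_lt_one (by linarith)).2 (by linarith)
  set q := ENNReal.ofReal p / ENNReal.ofReal s with hq_def
  have hHolder : ENNReal.HolderTriple (ENNReal.ofReal (N * p)) q (ENNReal.ofReal p) := by
    rw [hq_def, ← ENNReal.ofReal_div_of_pos hs]
    refine Real.HolderTriple.ennrealOfReal ⟨?_, by positivity, by positivity⟩
    have hNs : N * s = N - 1 := mul_div_cancel₀ _ (by linarith)
    field_simp
    linarith
  have hq : 1 ≤ q := by
    rw [hq_def, ← ENNReal.ofReal_div_of_pos hs]
    exact ENNReal.one_le_ofReal.2 ((one_le_div hs).2 (by linarith))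
  calc eLpNorm (fun x => f x ^ N - g x ^ N) (ENNReal.ofReal p) μ
      ≤ eLpNorm (N • ((fun x => f x - g x) • fun x => f x ^ (N - 1) + g x ^ (N - 1)))
          (ENNReal.ofReal p) μ := by
        refine eLpNorm_mono fun x => ?_
        have hsum : 0 ≤ f x ^ (N - 1) + g x ^ (N - 1) :=
          add_nonneg (Real.rpow_nonneg (hf x) _) (Real.rpow_nonneg (hg x) _)
        simp only [Pi.smul_apply, Pi.mul_apply, smul_eq_mul, Real.norm_eq_abs, abs_mul,
          abs_of_nonneg hsum, abs_of_pos (by linarith : 0 < N), ← mul_assoc]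
        exact Real.abs_rpow_sub_rpow_le hN.le (hf x) (hg x)
    _ = ENNReal.ofReal N * eLpNorm ((fun x => f x - g x) • fun x => f x ^ (N - 1) + g x ^ (N - 1))
          (ENNReal.ofReal p) μ := by
        rw [eLpNorm_const_smul, Real.enorm_of_nonneg (by linarith)]
    _ ≤ ENNReal.ofReal N * (eLpNorm (fun x => f x - g x) (ENNReal.ofReal (N * p)) μ *
          eLpNorm (fun x => f x ^ (N - 1) + g x ^ (N - 1)) q μ) := by
        gcongr
        exact eLpNorm_smul_le_mul_eLpNorm (by fun_prop) (by fun_prop)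
    _ ≤ ENNReal.ofReal N * (eLpNorm (fun x => f x - g x) (ENNReal.ofReal (N * p)) μ *
          (eLpNorm (fun x => f x ^ (N - 1)) q μ +
            eLpNorm (fun x => g x ^ (N - 1)) q μ)) := by
        gcongr
        exact eLpNorm_add_le (hfm.pow_const _).aestronglyMeasurable
          (hgm.pow_const _).aestronglyMeasurable hq
    _ = _ := by
        rw [eLpNorm_rpow_sub_one_of_nonneg hN hf, eLpNorm_rpow_sub_one_of_nonneg hN hg, mul_assoc]

end

/-- Claim 3' of the uniqueness proof: for nonnegative measurable `f, g` and
`N = 2n/(n-2)`,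
`‖f^N − g^N‖_{L^(N/2+1)} ≤ N ‖f − g‖_{L^(N(N/2+1))}
    (‖f^N‖_{L^(N/2+1)}^((N-1)/N) + ‖g^N‖_{L^(N/2+1)}^((N-1)/N))`. -/
theorem lp_estimate_power_difference
    (n : ℕ) (hn : 3 ≤ n) (N : ℝ) (hN : N = 2 * (n : ℝ) / ((n : ℝ) - 2))
    {X : Type*} [MeasurableSpace X] (μ : Measure X)
    (f g : X → ℝ) (hfm : Measurable f) (hgm : Measurable g)
    (hf : ∀ x, 0 ≤ f x) (hg : ∀ x, 0 ≤ g x) :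
    eLpNorm (fun x => f x ^ N - g x ^ N) (ENNReal.ofReal (N / 2 + 1)) μ ≤
      ENNReal.ofReal N *
        eLpNorm (fun x => f x - g x) (ENNReal.ofReal (N * (N / 2 + 1))) μ *
        ((eLpNorm (fun x => f x ^ N) (ENNReal.ofReal (N / 2 + 1)) μ) ^ ((N - 1) / N) +
          (eLpNorm (fun x => g x ^ N) (ENNReal.ofReal (N / 2 + 1)) μ) ^ ((N - 1) / N)) := by
  have hn' : (3 : ℝ) ≤ n := by exact_mod_cast hn
  have hN2 : 2 < N := by
    rw [hN, lt_div_iff₀ (by linarith)]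
    linarith
  exact eLpNorm_rpow_sub_rpow_le (by linarith) (by linarith) hfm.aemeasurable hgm.aemeasurable
    hf hg
end
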